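/- Let x : ℕ → Fin b be a disjunctive sequence over an alphabet of size b (every finite word over Fin b occurs as a contiguous subword of x). Let G be a deterministic automaton on finite state set V over alphabet Fin b with a sink state ṽ reachable from every state. Then for any initial state v₀, there exists an index N such that running the automaton from v₀ on the first N symbols of x reaches ṽ. -/

import Mathlib

def run {V B : Type*} (δ : V → B → V) (v : V) (w : List B) : V :=
  w.foldl δ v

/-- `w` occurs in the sequence `x` at position `i`. -/
def OccursAt {b : ℕ} (x : ℕ → Fin b) (w : List (Fin b)) (i : ℕ) : Prop :=
  List.ofFn (fun j : Fin w.length => x (i + j)) = w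

/-- `x` is disjunctive: every finite word occurs as a contiguous subword. -/
def Disjunctive {b : ℕ} (x : ℕ → Fin b) : Prop :=
  ∀ w : List (Fin b), ∃ i : ℕ, OccursAt x w i

/-! Because the sink absorbs, words driving the states one at a time into the sink can be
concatenated into a single word `W` that drives every state into the sink. Disjunctivity places
`W` somewhere in `x`, and the prefix of `x` ending with that occurrence drives `v₀` into the sink. -/

section Automaton

variable {V B : Type*} (δ : V → B → V)

lemma run_append (v : V) (w₁ w₂ : List B) :
    run δ v (w₁ ++ w₂) = run δ (run δ v w₁) w₂ :=
  List.foldl_append ..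

lemma run_sink_eq_self {vs : V} (hsink : ∀ c : B, δ vs c = vs) (w : List B) :
    run δ vs w = vs := by
  induction w with
  | nil => rfl
  | cons a w ih => simpa [run, hsink] using ih

lemma exists_forall_mem_run_eq_sink {vs : V} (hsink : ∀ c : B, δ vs c = vs)
    (hreach : ∀ v : V, ∃ w : List B, run δ v w = vs) (s : Finset V) :
    ∃ W : List B, ∀ v ∈ s, run δ v W = vs := by
  classical
  induction s using Finset.induction with
  | empty => exact ⟨[], by simp⟩
  | insert a s _ ih =>
    obtain ⟨W, hW⟩ := ih
    obtain ⟨w, hw⟩ := hreach (run δ a W)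
    refine ⟨W ++ w, fun v hv => ?_⟩
    rcases Finset.mem_insert.mp hv with rfl | hv
    · rw [run_append, hw]
    · rw [run_append, hW v hv, run_sink_eq_self δ hsink]

lemma exists_forall_run_eq_sink [Finite V] {vs : V} (hsink : ∀ c : B, δ vs c = vs)
    (hreach : ∀ v : V, ∃ w : List B, run δ v w = vs) :
    ∃ W : List B, ∀ v : V, run δ v W = vs := by
  have := Fintype.ofFinite V
  obtain ⟨W, hW⟩ := exists_forall_mem_run_eq_sink δ hsink hreach Finset.univ
  exact ⟨W, fun v => hW v (Finset.mem_univ v)⟩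

end Automaton

lemma OccursAt.ofFn_prefix_eq_append {b : ℕ} {x : ℕ → Fin b} {w : List (Fin b)} {i : ℕ}
    (h : OccursAt x w i) :
    List.ofFn (fun j : Fin (i + w.length) => x j) = List.ofFn (fun j : Fin i => x j) ++ w := by
  rw [List.ofFn_add]
  exact congrArg (_ ++ ·) h

/-- A disjunctive input sequence eventually drives any finite automaton
with a sink state reachable from every state into the sink state. -/
theorem disjunctive_reaches_sink
    {b : ℕ} {V : Type*} [Fintype V]
    (x : ℕ → Fin b) (hx : Disjunctive x)
    (δ : V → Fin b → V) (vs : V)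
    (hsink : ∀ c : Fin b, δ vs c = vs)
    (hreach : ∀ v : V, ∃ w : List (Fin b), run δ v w = vs)
    (v₀ : V) :
    ∃ N : ℕ, run δ v₀ (List.ofFn (fun j : Fin N => x j)) = vs := by
  obtain ⟨W, hW⟩ := exists_forall_run_eq_sink δ hsink hreach
  obtain ⟨i, hi⟩ := hx W
  refine ⟨i + W.length, ?_⟩
  rw [hi.ofFn_prefix_eq_append, run_append, hW]
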